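/- arXiv:1803.09964 — 3 statements merged into one kernel-verified Lean document; each statement's English description precedes it below -/
import Mathlib

section
/- If φ : [0,∞) → ℝ is continuous and convex, then for all x, y ≥ 0, Λ(φ)(x,y) := φ(x+y) + φ(|x−y|) − 2φ(max{x,y}) ≥ 0. -/
theorem ConvexOn.two_mul_map_midpoint_le {E : Type*} [AddCommGroup E] [Module ℝ E]
    {s : Set E} {f : E → ℝ} (hf : ConvexOn ℝ s f) {a b : E} (ha : a ∈ s) (hb : b ∈ s) :
    2 * f (midpoint ℝ a b) ≤ f a + f b := by
  have h := hf.2 ha hb (by norm_num : (0 : ℝ) ≤ 2⁻¹) (by norm_num : (0 : ℝ) ≤ 2⁻¹)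
    (by norm_num)
  rw [← smul_add, ← invOf_eq_inv, ← midpoint_eq_smul_add, smul_eq_mul, smul_eq_mul,
    invOf_eq_inv] at h
  linarith

theorem lambda_nonneg_of_convex_general (φ : ℝ → ℝ)
    (hconv : ConvexOn ℝ (Set.Ici 0) φ) :
    ∀ x y : ℝ, 0 ≤ x → 0 ≤ y →
      0 ≤ φ (x + y) + φ (|x - y|) - 2 * φ (max x y) := by
  intro x y hx hy
  wlog hyx : y ≤ x generalizing x y
  · rw [add_comm x y, abs_sub_comm x y, max_comm x y]
    exact this y x hy hx (le_of_not_ge hyx)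
  -- `x` is the midpoint of `x + y` and `x - y`, both of which lie in `[0, ∞)`.
  rw [abs_of_nonneg (sub_nonneg.2 hyx), max_eq_left hyx]
  have h := hconv.two_mul_map_midpoint_le (Set.mem_Ici.2 (add_nonneg hx hy))
    (Set.mem_Ici.2 (sub_nonneg.2 hyx))
  rw [midpoint_add_sub] at h
  linarith

theorem lambda_nonneg_of_convex (φ : ℝ → ℝ)
    (hcont : ContinuousOn φ (Set.Ici 0))
    (hconv : ConvexOn ℝ (Set.Ici 0) φ) :
    ∀ x y : ℝ, 0 ≤ x → 0 ≤ y →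
      0 ≤ φ (x + y) + φ (|x - y|) - 2 * φ (max x y) :=
  lambda_nonneg_of_convex_general φ hconv
end

section
/- Let α ≥ 3 and φ(x) = x^α. Then for all 0 ≤ y ≤ x, Λ(φ)(x,y) = (x+y)^α + (x−y)^α − 2x^α ≤ α(α−1)·2^{α−3}·x^{α−2}·y². -/
/-!
The second derivative in `y` of `(x + y) ^ α + (x - y) ^ α - 2 * x ^ α` is
`α (α - 1) ((x + y) ^ (α - 2) + (x - y) ^ (α - 2))`, and since `α - 2 ≥ 1` the power
`t ↦ t ^ (α - 2)` is superadditive, so this is at most `α (α - 1) (2x) ^ (α - 2)`.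
The function and its first derivative vanish at `y = 0`, so integrating this bound twice
gives the claim.
-/

open Set

lemma monotoneOn_Icc_of_hasDerivAt_nonneg {f f' : ℝ → ℝ} {a b : ℝ}
    (hf : ∀ t, HasDerivAt f (f' t) t) (hf' : ∀ t ∈ Ioo a b, 0 ≤ f' t) :
    MonotoneOn f (Icc a b) :=
  monotoneOn_of_hasDerivWithinAt_nonneg (convex_Icc a b)
    (fun t _ ↦ (hf t).continuousAt.continuousWithinAt)
    (fun t _ ↦ (hf t).hasDerivWithinAt) (by rwa [interior_Icc])

lemma le_half_mul_sq_of_hasDerivAt_of_deriv2_le {g g' g'' : ℝ → ℝ} {M a : ℝ}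
    (hg : ∀ t, HasDerivAt g (g' t) t) (hg' : ∀ t, HasDerivAt g' (g'' t) t)
    (h0 : g 0 = 0) (h0' : g' 0 = 0) (hM : ∀ t ∈ Ioo 0 a, g'' t ≤ M) :
    ∀ t ∈ Icc 0 a, g t ≤ M / 2 * t ^ 2 := by
  intro t ht
  have ha : 0 ∈ Icc 0 a := left_mem_Icc.2 (ht.1.trans ht.2)
  have hslope : ∀ s ∈ Icc 0 a, g' s ≤ M * s := by
    intro s hs
    have hmono : MonotoneOn (fun s ↦ M * s - g' s) (Icc 0 a) :=
      monotoneOn_Icc_of_hasDerivAt_nonneg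
        (fun s ↦ ((hasDerivAt_id s).const_mul M).sub (hg' s))
        (fun s hs ↦ by simpa using hM s hs)
    simpa [h0'] using hmono ha hs hs.1
  have hmono : MonotoneOn (fun s ↦ M / 2 * s ^ 2 - g s) (Icc 0 a) :=
    monotoneOn_Icc_of_hasDerivAt_nonneg (f' := fun s ↦ M * s - g' s)
      (fun s ↦ (((hasDerivAt_pow 2 s).const_mul (M / 2)).sub (hg s)).congr_deriv (by ring))
      (fun s hs ↦ sub_nonneg.2 (hslope s (Ioo_subset_Icc_self hs)))
  simpa [h0] using hmono ha ht ht.1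

section SymmetricRpow

variable (x : ℝ) {p : ℝ}

lemma hasDerivAt_rpow_add_add_rpow_sub (hp : 1 ≤ p) (t : ℝ) :
    HasDerivAt (fun t ↦ (x + t) ^ p + (x - t) ^ p)
      (p * ((x + t) ^ (p - 1) - (x - t) ^ (p - 1))) t := by
  have hplus := ((hasDerivAt_id t).const_add x).rpow_const (p := p) (Or.inr hp)
  have hminus := ((hasDerivAt_neg t).const_add x).rpow_const (p := p) (Or.inr hp)
  exact (hplus.add hminus).congr_deriv (by simp only [id, sub_eq_add_neg]; ring)

lemma hasDerivAt_rpow_add_sub_rpow_sub (hp : 1 ≤ p) (t : ℝ) :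
    HasDerivAt (fun t ↦ (x + t) ^ p - (x - t) ^ p)
      (p * ((x + t) ^ (p - 1) + (x - t) ^ (p - 1))) t := by
  have hplus := ((hasDerivAt_id t).const_add x).rpow_const (p := p) (Or.inr hp)
  have hminus := ((hasDerivAt_neg t).const_add x).rpow_const (p := p) (Or.inr hp)
  exact (hplus.sub hminus).congr_deriv (by simp only [id, sub_eq_add_neg]; ring)

end SymmetricRpow

theorem lambda_rpow_bound (α : ℝ) (hα : 3 ≤ α) :
    ∀ x y : ℝ, 0 ≤ y → y ≤ x →
      (x + y) ^ α + (x - y) ^ α - 2 * x ^ α ≤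
        α * (α - 1) * 2 ^ (α - 3) * x ^ (α - 2) * y ^ 2 := by
  intro x y hy hyx
  have hx : 0 ≤ x := hy.trans hyx
  have hsecond : ∀ t ∈ Ioo 0 x,
      α * ((α - 1) * ((x + t) ^ (α - 1 - 1) + (x - t) ^ (α - 1 - 1))) ≤
        α * (α - 1) * (2 * x) ^ (α - 2) := by
    intro t ht
    have hsuper := Real.add_rpow_le_rpow_add (a := x + t) (b := x - t) (p := α - 2)
      (by linarith [ht.1]) (by linarith [ht.2]) (by linarith)
    rw [show x + t + (x - t) = 2 * x by ring] at hsuper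
    rw [show α - 1 - 1 = α - 2 by ring, ← mul_assoc]
    exact mul_le_mul_of_nonneg_left hsuper (by nlinarith)
  have hquad := le_half_mul_sq_of_hasDerivAt_of_deriv2_le
    (fun t ↦ (hasDerivAt_rpow_add_add_rpow_sub x (by linarith) t).sub_const (2 * x ^ α))
    (fun t ↦ (hasDerivAt_rpow_add_sub_rpow_sub x (by linarith) t).const_mul α)
    (by simp only [add_zero, sub_zero]; ring) (by simp) hsecond y ⟨hy, hyx⟩
  calc (x + y) ^ α + (x - y) ^ α - 2 * x ^ α
      ≤ α * (α - 1) * (2 * x) ^ (α - 2) / 2 * y ^ 2 := hquad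
    _ = α * (α - 1) * 2 ^ (α - 3) * x ^ (α - 2) * y ^ 2 := by
      rw [Real.mul_rpow zero_le_two hx, show α - 2 = α - 3 + 1 by ring,
        Real.rpow_add_one two_ne_zero]
      ring
end

section
/- Let g be a nonnegative measure on (0,∞) with N = ∫ g(dx) and E = ∫ x g(dx) finite, and let α ∈ (1,2]. For φ(x) = x^α and 0 < y ≤ x one has Λ(φ)(x,y)/√(xy) ≤ (2^α − 2)(xy)^{(α−1)/2}, and consequently the double integral ∬_{(0,∞)²} [Λ(φ)(x,y)/√(xy)] g(dx) g(dy) ≤ (2^α − 2)·(M_{(α−1)/2}(g))², where Λ(φ)(x,y) = (x+y)^α + (x−y)^α − 2·max(x,y)^α. -/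
/-! For `y ≤ x` the points `x ± y` are the convex combinations `(1 - y/x) x + (y/x) 2x` and
`(1 - y/x) x + (y/x) 0`, so convexity of `φ` gives `Λ(φ)(x, y) ≤ (y/x) (φ(2x) + φ(0) - 2φ(x))`,
which for `φ = t ^ α` is `(2^α - 2) y x^(α-1) ≤ (2^α - 2) (xy)^(α/2)` as `α ≤ 2`. Midpoint
convexity makes `Λ(φ) ≥ 0`, so the double integral is bounded by integrating the product bound
`(2^α - 2) x^β y^β`, `β = (α - 1)/2`, one variable at a time. -/

open MeasureTheory Set

noncomputable section

def lambdaOp (φ : ℝ → ℝ) (x y : ℝ) : ℝ :=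
  φ (x + y) + φ |x - y| - 2 * φ (max x y)

lemma lambdaOp_comm (φ : ℝ → ℝ) (x y : ℝ) : lambdaOp φ x y = lambdaOp φ y x := by
  rw [lambdaOp, lambdaOp, add_comm x, abs_sub_comm, max_comm]

namespace ConvexOn

variable {φ : ℝ → ℝ} {x y : ℝ}

lemma lambdaOp_nonneg (hφ : ConvexOn ℝ (Ici 0) φ) (hx : 0 ≤ x) (hy : 0 ≤ y) :
    0 ≤ lambdaOp φ x y := by
  have hmid := hφ.2 (mem_Ici.2 (add_nonneg hx hy)) (mem_Ici.2 (abs_nonneg (x - y)))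
    (by norm_num : (0 : ℝ) ≤ 1 / 2) (by norm_num : (0 : ℝ) ≤ 1 / 2) (by norm_num)
  have hmax : (1 / 2 : ℝ) • (x + y) + (1 / 2 : ℝ) • |x - y| = max x y := by
    rw [smul_eq_mul, smul_eq_mul, ← max_sub_min_eq_abs', ← max_add_min x y]
    ring
  rw [hmax, smul_eq_mul, smul_eq_mul] at hmid
  rw [lambdaOp]
  linarith

lemma lambdaOp_le (hφ : ConvexOn ℝ (Ici 0) φ) (hx : 0 < x) (hy : 0 ≤ y) (hyx : y ≤ x) :
    lambdaOp φ x y ≤ y / x * (φ (2 * x) + φ 0 - 2 * φ x) := by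
  set s := y / x
  have hs0 : 0 ≤ s := div_nonneg hy hx.le
  have hs1 : 0 ≤ 1 - s := sub_nonneg.2 ((div_le_one hx).2 hyx)
  have hsx : s * x = y := div_mul_cancel₀ y hx.ne'
  have hplus := hφ.2 (mem_Ici.2 hx.le) (mem_Ici.2 (by positivity : (0 : ℝ) ≤ 2 * x)) hs1 hs0
    (by ring)
  have hminus := hφ.2 (mem_Ici.2 hx.le) (mem_Ici.2 le_rfl) hs1 hs0 (by ring)
  have hxy_plus : (1 - s) • x + s • (2 * x) = x + y := by
    rw [smul_eq_mul, smul_eq_mul, ← hsx]; ring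
  have hxy_minus : (1 - s) • x + s • (0 : ℝ) = |x - y| := by
    rw [abs_of_nonneg (sub_nonneg.2 hyx), smul_eq_mul, smul_eq_mul, ← hsx]; ring
  rw [hxy_plus, smul_eq_mul, smul_eq_mul] at hplus
  rw [hxy_minus, smul_eq_mul, smul_eq_mul] at hminus
  rw [lambdaOp, max_eq_left hyx]
  linarith

end ConvexOn

section Rpow

variable {α x y : ℝ}

lemma two_rpow_sub_two_nonneg (hα : 1 ≤ α) : 0 ≤ (2 : ℝ) ^ α - 2 := by
  have h := Real.rpow_le_rpow_of_exponent_le one_le_two hα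
  rw [Real.rpow_one] at h
  linarith

lemma mul_rpow_sub_one_le_mul_rpow_half (hα : α ≤ 2) (hy : 0 < y) (hyx : y ≤ x) :
    y * x ^ (α - 1) ≤ (x * y) ^ (α / 2) := by
  have hx := hy.trans_le hyx
  have hsplit : y ^ (α / 2) * y ^ (1 - α / 2) = y := by
    rw [← Real.rpow_add hy]; norm_num
  calc y * x ^ (α - 1) = y ^ (α / 2) * y ^ (1 - α / 2) * x ^ (α - 1) := by rw [hsplit]
    _ ≤ y ^ (α / 2) * x ^ (1 - α / 2) * x ^ (α - 1) := by
        gcongr; linarith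
    _ = (x * y) ^ (α / 2) := by
        rw [mul_assoc, ← Real.rpow_add hx, Real.mul_rpow hx.le hy.le, mul_comm]
        ring_nf

lemma lambdaOp_rpow_le (hα1 : 1 ≤ α) (hα2 : α ≤ 2) (hy : 0 < y) (hyx : y ≤ x) :
    lambdaOp (· ^ α) x y ≤ (2 ^ α - 2) * (x * y) ^ (α / 2) := by
  have hx := hy.trans_le hyx
  have hconv := (convexOn_rpow hα1).lambdaOp_le hx hy.le hyx
  have hφ : y / x * ((2 * x) ^ α + (0 : ℝ) ^ α - 2 * x ^ α) =
      (2 ^ α - 2) * (y * x ^ (α - 1)) := by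
    rw [Real.zero_rpow (by linarith), Real.mul_rpow zero_le_two hx.le, Real.rpow_sub_one hx.ne']
    field_simp
    ring
  rw [hφ] at hconv
  exact hconv.trans (mul_le_mul_of_nonneg_left (mul_rpow_sub_one_le_mul_rpow_half hα2 hy hyx)
    (two_rpow_sub_two_nonneg hα1))

lemma lambdaOp_rpow_div_sqrt_le (hα1 : 1 ≤ α) (hα2 : α ≤ 2) (hx : 0 < x) (hy : 0 < y) :
    lambdaOp (· ^ α) x y / Real.sqrt (x * y) ≤ (2 ^ α - 2) * (x * y) ^ ((α - 1) / 2) := by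
  wlog hyx : y ≤ x generalizing x y
  · rw [lambdaOp_comm, mul_comm x y]
    exact this hy hx (le_of_not_ge hyx)
  have hxy := mul_pos hx hy
  rw [div_le_iff₀ (Real.sqrt_pos.2 hxy), Real.sqrt_eq_rpow, mul_assoc, ← Real.rpow_add hxy,
    show (α - 1) / 2 + 1 / 2 = α / 2 by ring]
  exact lambdaOp_rpow_le hα1 hα2 hy hyx

end Rpow

lemma integrableOn_rpow_Ioi_of_integrable {μ : Measure ℝ} [IsFiniteMeasure μ] {β : ℝ}
    (hμ : Integrable (fun x => x) μ) (hβ0 : 0 < β) (hβ1 : β ≤ 1) :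
    IntegrableOn (fun x => x ^ β) (Ioi 0) μ := by
  have hβ : ENNReal.ofReal β ≤ 1 := ENNReal.ofReal_le_one.2 hβ1
  have hnorm := ((memLp_one_iff_integrable.2 hμ).mono_exponent hβ).integrable_norm_rpow
    (by simpa using hβ0) ENNReal.ofReal_ne_top
  rw [ENNReal.toReal_ofReal hβ0.le] at hnorm
  refine hnorm.integrableOn.congr_fun (fun x hx => ?_) measurableSet_Ioi
  simp only [Real.norm_of_nonneg (le_of_lt hx)]

theorem integral_integral_le_integral_mul_integral {X Y : Type*} [MeasurableSpace X]
    [MeasurableSpace Y] {μ : Measure X} {ν : Measure Y} {f : X → Y → ℝ} {h : X → ℝ} {k : Y → ℝ}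
    (hf0 : ∀ᵐ x ∂μ, ∀ᵐ y ∂ν, 0 ≤ f x y) (hf : ∀ᵐ x ∂μ, ∀ᵐ y ∂ν, f x y ≤ h x * k y)
    (hh : Integrable h μ) (hk : Integrable k ν) :
    ∫ x, ∫ y, f x y ∂ν ∂μ ≤ (∫ x, h x ∂μ) * ∫ y, k y ∂ν := by
  have hinner : ∀ᵐ x ∂μ, ∫ y, f x y ∂ν ≤ h x * ∫ y, k y ∂ν := by
    filter_upwards [hf0, hf] with x hx0 hx
    rw [← integral_const_mul]
    exact integral_mono_of_nonneg hx0 (hk.const_mul _) hx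
  calc ∫ x, ∫ y, f x y ∂ν ∂μ ≤ ∫ x, h x * ∫ y, k y ∂ν ∂μ :=
        integral_mono_of_nonneg (hf0.mono fun x hx => integral_nonneg_of_ae hx)
          (hh.mul_const _) hinner
    _ = (∫ x, h x ∂μ) * ∫ y, k y ∂ν := integral_mul_const _ _

end

theorem lambda_quadratic_estimate_general (g : Measure ℝ) [IsFiniteMeasure g]
    (α : ℝ) (hα1 : 1 < α) (hα2 : α ≤ 2)
    (hE : Integrable (fun x => x) g) :
    (∀ x y : ℝ, 0 < y → y ≤ x →
      ((x + y) ^ α + (x - y) ^ α - 2 * max x y ^ α) / Real.sqrt (x * y) ≤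
        (2 ^ α - 2) * (x * y) ^ ((α - 1) / 2)) ∧
    (∫ x in Set.Ioi (0:ℝ), ∫ y in Set.Ioi (0:ℝ),
        ((x + y) ^ α + |x - y| ^ α - 2 * max x y ^ α) / Real.sqrt (x * y) ∂g ∂g) ≤
      (2 ^ α - 2) * (∫ x in Set.Ioi (0:ℝ), x ^ ((α - 1) / 2) ∂g) ^ 2 := by
  refine ⟨fun x y hy hyx => ?_, ?_⟩
  · have h := lambdaOp_rpow_div_sqrt_le hα1.le hα2 (hy.trans_le hyx) hy
    rwa [lambdaOp, abs_of_nonneg (sub_nonneg.2 hyx)] at h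
  have hmoment := integrableOn_rpow_Ioi_of_integrable hE (by linarith : 0 < (α - 1) / 2)
    (by linarith)
  have hpos : ∀ᵐ x ∂g.restrict (Ioi 0), 0 < x := ae_restrict_mem measurableSet_Ioi
  calc _ ≤ (∫ x in Ioi 0, (2 ^ α - 2) * x ^ ((α - 1) / 2) ∂g) *
        ∫ y in Ioi 0, y ^ ((α - 1) / 2) ∂g := by
        refine integral_integral_le_integral_mul_integral ?_ ?_ (hmoment.const_mul _) hmoment
        · filter_upwards [hpos] with x hx
          filter_upwards [hpos] with y hy
          exact div_nonneg ((convexOn_rpow hα1.le).lambdaOp_nonneg hx.le hy.le)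
            (Real.sqrt_nonneg _)
        · filter_upwards [hpos] with x hx
          filter_upwards [hpos] with y hy
          rw [mul_assoc, ← Real.mul_rpow hx.le hy.le]
          exact lambdaOp_rpow_div_sqrt_le hα1.le hα2 hx hy
    _ = _ := by rw [integral_const_mul]; ring

theorem lambda_quadratic_estimate (g : Measure ℝ) [IsFiniteMeasure g]
    (α : ℝ) (hα1 : 1 < α) (hα2 : α ≤ 2)
    (hsupp : g (Set.Ioi 0)ᶜ = 0)
    (hE : Integrable (fun x => x) g) :
    (∀ x y : ℝ, 0 < y → y ≤ x →
      ((x + y) ^ α + (x - y) ^ α - 2 * max x y ^ α) / Real.sqrt (x * y) ≤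
        (2 ^ α - 2) * (x * y) ^ ((α - 1) / 2)) ∧
    (∫ x in Set.Ioi (0:ℝ), ∫ y in Set.Ioi (0:ℝ),
        ((x + y) ^ α + |x - y| ^ α - 2 * max x y ^ α) / Real.sqrt (x * y) ∂g ∂g) ≤
      (2 ^ α - 2) * (∫ x in Set.Ioi (0:ℝ), x ^ ((α - 1) / 2) ∂g) ^ 2 :=
  lambda_quadratic_estimate_general g α hα1 hα2 hE
end
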